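/- arXiv:2008.06334 — 2 statements merged into one kernel-verified Lean document; each statement's English description precedes it below -/
import Mathlib

section
/- Let N ∈ ℕ and α > 0. Let (H^k)_{k≥0} be symmetric N×N matrices converging to a symmetric positive-definite matrix H* with α·λ_max(H*) < 2, and let (B^k)_{k≥0} be symmetric positive-semidefinite matrices converging to B*. Then: (i) there is a unique symmetric matrix C* satisfying the fixed-point equation H*C* + C*H* − α H*C*H* = B*, equivalently C* = (I − αH*)C*(I − αH*) + αB*; and (ii) the sequence defined by C^0 = 0 and C^{k+1} = C^k − αH^kC^k − αC^kH^k + α²H^kC^kH^k + αB^k converges to C* as k → ∞. -/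
open Filter Topology Matrix

variable {N : ℕ}

def matNN (A : Matrix (Fin N) (Fin N) ℝ) : ℝ := ∑ i, ∑ j, |A i j|

lemma matNN_nonneg (A : Matrix (Fin N) (Fin N) ℝ) : 0 ≤ matNN A :=
  Finset.sum_nonneg fun _ _ => Finset.sum_nonneg fun _ _ => abs_nonneg _

lemma abs_entry_le_matNN (A : Matrix (Fin N) (Fin N) ℝ) (i j : Fin N) : |A i j| ≤ matNN A := by
  calc |A i j| ≤ ∑ j', |A i j'| :=
        Finset.single_le_sum (f := fun j' => |A i j'|) (fun _ _ => abs_nonneg _) (Finset.mem_univ j)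
    _ ≤ matNN A :=
        Finset.single_le_sum (f := fun i' => ∑ j', |A i' j'|)
          (fun _ _ => Finset.sum_nonneg fun _ _ => abs_nonneg _) (Finset.mem_univ i)

lemma matNN_add_le (A B : Matrix (Fin N) (Fin N) ℝ) : matNN (A + B) ≤ matNN A + matNN B := by
  unfold matNN
  rw [← Finset.sum_add_distrib]
  refine Finset.sum_le_sum fun i _ => ?_
  rw [← Finset.sum_add_distrib]
  exact Finset.sum_le_sum fun j _ => by simpa using abs_add_le (A i j) (B i j)

lemma matNN_neg (A : Matrix (Fin N) (Fin N) ℝ) : matNN (-A) = matNN A := by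
  simp [matNN]

lemma matNN_smul (c : ℝ) (A : Matrix (Fin N) (Fin N) ℝ) : matNN (c • A) = |c| * matNN A := by
  simp [matNN, abs_mul, Finset.mul_sum]

lemma matNN_mul_le (A B : Matrix (Fin N) (Fin N) ℝ) : matNN (A * B) ≤ matNN A * matNN B := by
  have h1 : matNN (A * B) ≤ ∑ i, ∑ j, ∑ k, |A i k| * |B k j| := by
    refine Finset.sum_le_sum fun i _ => Finset.sum_le_sum fun j _ => ?_
    calc |(A * B) i j| = |∑ k, A i k * B k j| := by rw [Matrix.mul_apply]
      _ ≤ ∑ k, |A i k * B k j| := Finset.abs_sum_le_sum_abs _ _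
      _ = ∑ k, |A i k| * |B k j| := by simp [abs_mul]
  have h2 : (∑ i, ∑ j, ∑ k, |A i k| * |B k j|) = ∑ k, (∑ i, |A i k|) * (∑ j, |B k j|) := by
    calc (∑ i, ∑ j, ∑ k, |A i k| * |B k j|) = ∑ i, ∑ k, ∑ j, |A i k| * |B k j| :=
          Finset.sum_congr rfl fun i _ => Finset.sum_comm
      _ = ∑ k, ∑ i, ∑ j, |A i k| * |B k j| := Finset.sum_comm
      _ = ∑ k, (∑ i, |A i k|) * (∑ j, |B k j|) := by
          refine Finset.sum_congr rfl fun k _ => ?_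
          rw [Finset.sum_mul]
          refine Finset.sum_congr rfl fun i _ => ?_
          rw [Finset.mul_sum]
  have h3 : (∑ k, (∑ i, |A i k|) * (∑ j, |B k j|)) ≤ ∑ k, matNN A * (∑ j, |B k j|) := by
    refine Finset.sum_le_sum fun k _ => ?_
    refine mul_le_mul_of_nonneg_right ?_ (Finset.sum_nonneg fun _ _ => abs_nonneg _)
    exact Finset.sum_le_sum fun i _ =>
      Finset.single_le_sum (f := fun j => |A i j|) (fun _ _ => abs_nonneg _) (Finset.mem_univ k)
  calc matNN (A * B) ≤ _ := h1
    _ = _ := h2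
    _ ≤ _ := h3
    _ = matNN A * matNN B := by rw [← Finset.mul_sum]; rfl

lemma matNN_diag_conj (d : Fin N → ℝ) (q : ℝ) (hq : 0 ≤ q) (hd : ∀ i, |d i| ≤ q)
    (A : Matrix (Fin N) (Fin N) ℝ) :
    matNN (Matrix.diagonal d * A * Matrix.diagonal d) ≤ q ^ 2 * matNN A := by
  have hentry : ∀ i j, (Matrix.diagonal d * A * Matrix.diagonal d) i j = d i * A i j * d j := by
    intro i j
    rw [Matrix.mul_diagonal, Matrix.diagonal_mul]
  have : matNN (Matrix.diagonal d * A * Matrix.diagonal d) = ∑ i, ∑ j, |d i| * |A i j| * |d j| := by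
    simp [matNN, hentry, abs_mul]
  rw [this]
  have hq2 : ∀ (x : ℝ), q * x * q = q ^ 2 * x := fun x => by ring
  calc (∑ i, ∑ j, |d i| * |A i j| * |d j|) ≤ ∑ i, ∑ j, q * |A i j| * q := by
        refine Finset.sum_le_sum fun i _ => Finset.sum_le_sum fun j _ => ?_
        exact mul_le_mul (mul_le_mul (hd i) le_rfl (abs_nonneg _) hq) (hd j) (abs_nonneg _)
          (by positivity)
    _ = q ^ 2 * matNN A := by simp [hq2, matNN, Finset.mul_sum]

lemma tendsto_entry {A : ℕ → Matrix (Fin N) (Fin N) ℝ} {L : Matrix (Fin N) (Fin N) ℝ}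
    (h : Tendsto A atTop (𝓝 L)) (i j : Fin N) :
    Tendsto (fun k => A k i j) atTop (𝓝 (L i j)) := by
  have : Continuous fun M : Matrix (Fin N) (Fin N) ℝ => M i j :=
    (continuous_apply j).comp (continuous_apply i)
  exact (this.tendsto L).comp h

lemma matNN_tendsto {A : ℕ → Matrix (Fin N) (Fin N) ℝ} {L : Matrix (Fin N) (Fin N) ℝ}
    (h : Tendsto A atTop (𝓝 L)) :
    Tendsto (fun k => matNN (A k - L)) atTop (𝓝 0) := by
  have : ∀ i j : Fin N, Tendsto (fun k => |(A k - L) i j|) atTop (𝓝 0) := by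
    intro i j
    have h1 := (tendsto_entry h i j).sub (tendsto_const_nhds (x := L i j))
    rw [sub_self] at h1
    simpa [Matrix.sub_apply] using h1.abs
  have h2 : Tendsto (fun k => ∑ i : Fin N, ∑ j : Fin N, |(A k - L) i j|) atTop (𝓝 0) := by
    have := tendsto_finset_sum (Finset.univ (α := Fin N))
      (fun i _ => tendsto_finset_sum (Finset.univ (α := Fin N)) (fun j _ => this i j))
    simpa using this
  exact h2

lemma tendsto_of_matNN {A : ℕ → Matrix (Fin N) (Fin N) ℝ} {L : Matrix (Fin N) (Fin N) ℝ}
    (h : Tendsto (fun k => matNN (A k - L)) atTop (𝓝 0)) :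
    Tendsto A atTop (𝓝 L) := by
  refine tendsto_pi_nhds.mpr ?_
  intro i
  rw [tendsto_pi_nhds]
  intro j
  have h1 : Tendsto (fun k => A k i j - L i j) atTop (𝓝 0) := by
    refine squeeze_zero_norm (fun k => ?_) h
    simpa [Matrix.sub_apply] using abs_entry_le_matNN (A k - L) i j
  exact tendsto_sub_nhds_zero_iff.mp h1

lemma seq_tendsto_zero (e ε : ℕ → ℝ) (he : ∀ k, 0 ≤ e k) (q : ℝ) (hq0 : 0 ≤ q) (hq1 : q < 1)
    (hrec : ∀ᶠ k in atTop, e (k + 1) ≤ q * e k + ε k) (hε : Tendsto ε atTop (𝓝 0)) :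
    Tendsto e atTop (𝓝 0) := by
  rw [Metric.tendsto_atTop]
  intro r hr
  have hc : (0:ℝ) < (1 - q) * (r / 2) := by
    have : (0:ℝ) < 1 - q := by linarith
    positivity
  have hε' : ∀ᶠ k in atTop, ε k ≤ (1 - q) * (r / 2) :=
    (hε.eventually (Iio_mem_nhds hc)).mono fun k hk => le_of_lt hk
  obtain ⟨K, hK⟩ := (hrec.and hε').exists_forall_of_atTop
  have main : ∀ n, e (K + n) ≤ q ^ n * e K + r / 2 := by
    intro n
    induction n with
    | zero => simp; linarith [hr]
    | succ n ih =>
      obtain ⟨hr1, hr2⟩ := hK (K + n) (by omega)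
      have h1 : e (K + (n + 1)) ≤ q * e (K + n) + ε (K + n) := hr1
      have h2 : q * e (K + n) ≤ q * (q ^ n * e K + r / 2) :=
        mul_le_mul_of_nonneg_left ih hq0
      calc e (K + (n + 1)) ≤ q * (q ^ n * e K + r / 2) + (1 - q) * (r / 2) := by linarith
        _ = q ^ (n + 1) * e K + (q * (r/2) + (1 - q) * (r/2)) := by ring
        _ = q ^ (n + 1) * e K + r / 2 := by ring
  have hpow : Tendsto (fun n => q ^ n * e K) atTop (𝓝 0) := by
    have := (tendsto_pow_atTop_nhds_zero_of_lt_one hq0 hq1).mul_const (e K)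
    simpa using this
  obtain ⟨n0, hn0⟩ := (hpow.eventually (Iio_mem_nhds (half_pos hr))).exists_forall_of_atTop
  refine ⟨K + n0, fun k hk => ?_⟩
  have hkK : k = K + (k - K) := by omega
  have h1 : e k ≤ q ^ (k - K) * e K + r / 2 := by
    have := main (k - K)
    rwa [← hkK] at this
  have h2 : q ^ (k - K) * e K < r / 2 := hn0 (k - K) (by omega)
  rw [Real.dist_eq, sub_zero, abs_of_nonneg (he k)]
  linarith

set_option maxHeartbeats 1000000 in
/-- existence and uniqueness of the symmetric fixed point of the
covariance equation, and convergence of the covariance recursion to it. -/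
theorem covariance_recursion_converges
    (N : ℕ) (α : ℝ) (hα : 0 < α)
    (H : ℕ → Matrix (Fin N) (Fin N) ℝ) (hHsymm : ∀ k, (H k).IsSymm)
    (Hstar : Matrix (Fin N) (Fin N) ℝ) (hHstarsymm : Hstar.IsSymm)
    (hHlim : Tendsto H atTop (𝓝 Hstar))
    (hHpos : Hstar.PosDef)
    (hαH : ∀ i, α * hHpos.1.eigenvalues i < 2)
    (B : ℕ → Matrix (Fin N) (Fin N) ℝ) (hBpsd : ∀ k, (B k).PosSemidef)
    (Bstar : Matrix (Fin N) (Fin N) ℝ) (hBlim : Tendsto B atTop (𝓝 Bstar))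
    (C : ℕ → Matrix (Fin N) (Fin N) ℝ) (hC0 : C 0 = 0)
    (hCrec : ∀ k, C (k + 1) =
      C k - α • (H k * C k) - α • (C k * H k) + α ^ 2 • (H k * C k * H k) + α • B k) :
    ∃ Cstar : Matrix (Fin N) (Fin N) ℝ,
      (Cstar.IsSymm ∧
        Hstar * Cstar + Cstar * Hstar - α • (Hstar * Cstar * Hstar) = Bstar ∧
        Cstar = (1 - α • Hstar) * Cstar * (1 - α • Hstar) + α • Bstar) ∧
      (∀ C' : Matrix (Fin N) (Fin N) ℝ, C'.IsSymm →
        Hstar * C' + C' * Hstar - α • (Hstar * C' * Hstar) = Bstar → C' = Cstar) ∧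
      Tendsto C atTop (𝓝 Cstar) := by
  -- setup: eigen-decomposition of Hstar
  set lam : Fin N → ℝ := hHpos.1.eigenvalues with hlamdef
  set d : Fin N → ℝ := fun i => 1 - α * lam i with hddef
  set U : Matrix (Fin N) (Fin N) ℝ := (hHpos.1.eigenvectorUnitary : Matrix (Fin N) (Fin N) ℝ)
    with hUdef
  have hU1 : star U * U = 1 := Matrix.mem_unitaryGroup_iff'.mp (hHpos.1.eigenvectorUnitary).2
  have hU2 : U * star U = 1 := Matrix.mem_unitaryGroup_iff.mp (hHpos.1.eigenvectorUnitary).2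
  have hspec : Hstar = U * Matrix.diagonal lam * star U := by
    have h := hHpos.1.spectral_theorem
    have h2 : (RCLike.ofReal ∘ hHpos.1.eigenvalues : Fin N → ℝ) = hHpos.1.eigenvalues := by
      funext i; simp [RCLike.ofReal_real_eq_id]
    rw [h2] at h
    exact h
  have hsU : star U = U.transpose := by
    ext i j
    simp [Matrix.star_apply]
  have hdlt : ∀ i, |d i| < 1 := by
    intro i
    have hev : 0 < lam i := hHpos.eigenvalues_pos i
    rw [hddef]
    rw [abs_lt]
    constructor
    · simp only; linarith [hαH i]
    · simp only; nlinarith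
  obtain ⟨q, hq0, hq1, hdq⟩ : ∃ q, 0 ≤ q ∧ q < 1 ∧ ∀ i, |d i| ≤ q := by
    rcases isEmpty_or_nonempty (Fin N) with hN | hN
    · exact ⟨0, le_rfl, one_pos, fun i => isEmptyElim i⟩
    · refine ⟨Finset.univ.sup' Finset.univ_nonempty (fun i => |d i|), ?_, ?_,
        fun i => Finset.le_sup' (fun i => |d i|) (Finset.mem_univ i)⟩
      · exact le_trans (abs_nonneg _)
          (Finset.le_sup' (fun i => |d i|) (Finset.mem_univ hN.some))
      · exact (Finset.sup'_lt_iff _).mpr fun i _ => hdlt i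
  set Dd : Matrix (Fin N) (Fin N) ℝ := Matrix.diagonal d with hDd
  have hden : ∀ i j : Fin N, 0 < 1 - d i * d j := by
    intro i j
    have h1 : d i * d j ≤ |d i| * |d j| := by
      rw [← abs_mul]; exact le_abs_self _
    have h2 : |d i| * |d j| ≤ q * q := mul_le_mul (hdq i) (hdq j) (abs_nonneg _) hq0
    nlinarith
  set Bt : Matrix (Fin N) (Fin N) ℝ := star U * Bstar * U with hBtdef
  set Ystar : Matrix (Fin N) (Fin N) ℝ := Matrix.of fun i j => α * Bt i j / (1 - d i * d j)
    with hYstardef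
  have hYstar_apply : ∀ i j, Ystar i j = α * Bt i j / (1 - d i * d j) := fun i j => rfl
  have hYfix : Dd * Ystar * Dd + α • Bt = Ystar := by
    ext i j
    have hne := (hden i j).ne'
    simp only [Matrix.add_apply, Matrix.smul_apply, hDd, Matrix.mul_diagonal,
      Matrix.diagonal_mul, hYstar_apply, smul_eq_mul]
    field_simp
    ring
  -- conjugation helpers
  have conjU : ∀ X Z : Matrix (Fin N) (Fin N) ℝ,
      (U * X * star U) * (U * Z * star U) = U * (X * Z) * star U := by
    intro X Z
    calc (U * X * star U) * (U * Z * star U)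
        = U * (X * ((star U * U) * (Z * star U))) := by simp only [mul_assoc]
      _ = U * (X * Z) * star U := by rw [hU1, one_mul]; simp only [mul_assoc]
  have conjsU : ∀ X Z : Matrix (Fin N) (Fin N) ℝ,
      (star U * X * U) * (star U * Z * U) = star U * (X * Z) * U := by
    intro X Z
    calc (star U * X * U) * (star U * Z * U)
        = star U * (X * ((U * star U) * (Z * U))) := by simp only [mul_assoc]
      _ = star U * (X * Z) * U := by rw [hU2, one_mul]; simp only [mul_assoc]
  have conjTriple : ∀ X Z W : Matrix (Fin N) (Fin N) ℝ,
      star U * (X * Z * W) * U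
        = (star U * X * U) * (star U * Z * U) * (star U * W * U) := by
    intro X Z W
    calc star U * (X * Z * W) * U
        = (star U * (X * Z) * U) * (star U * W * U) := by rw [conjsU (X * Z) W]
      _ = (star U * X * U) * (star U * Z * U) * (star U * W * U) := by rw [conjsU X Z]
  have sandU : ∀ X : Matrix (Fin N) (Fin N) ℝ, U * (star U * X * U) * star U = X := by
    intro X
    simp only [← mul_assoc]
    rw [hU2, one_mul, mul_assoc, hU2, mul_one]
  have sandsU : ∀ X : Matrix (Fin N) (Fin N) ℝ, star U * (U * X * star U) * U = X := by
    intro X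
    simp only [← mul_assoc]
    rw [hU1, one_mul, mul_assoc, hU1, mul_one]
  set M : Matrix (Fin N) (Fin N) ℝ := 1 - α • Hstar with hMdef
  have hM : M = U * Dd * star U := by
    have h1 : Dd = 1 - α • Matrix.diagonal lam := by
      ext i j
      by_cases h : i = j
      · subst h
        simp [hDd, hddef, Matrix.diagonal_apply_eq, Matrix.one_apply_eq]
      · simp [hDd, Matrix.diagonal_apply_ne _ h, Matrix.one_apply_ne h]
    have h2 : U * (1 - α • Matrix.diagonal lam) * star U
        = U * star U - α • (U * Matrix.diagonal lam * star U) := by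
      simp only [mul_sub, sub_mul, mul_one, one_mul, smul_mul_assoc, mul_smul_comm]
    rw [hMdef, h1, h2, hU2, ← hspec]
  set Cstar : Matrix (Fin N) (Fin N) ℝ := U * Ystar * star U with hCstardef
  have hBsand : U * Bt * star U = Bstar := sandU Bstar
  have hfix : Cstar = M * Cstar * M + α • Bstar := by
    have h1 : M * Cstar * M = U * (Dd * Ystar * Dd) * star U := by
      rw [hM, hCstardef]
      calc (U * Dd * star U) * (U * Ystar * star U) * (U * Dd * star U)
          = (U * (Dd * Ystar) * star U) * (U * Dd * star U) := by rw [conjU]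
        _ = U * (Dd * Ystar * Dd) * star U := by rw [conjU]
    have h2 : U * (Dd * Ystar * Dd) * star U + α • (U * Bt * star U)
        = U * ((Dd * Ystar * Dd) + α • Bt) * star U := by
      simp only [mul_add, add_mul, smul_mul_assoc, mul_smul_comm]
    rw [h1, ← hBsand, h2, hYfix]
  have key : ∀ X : Matrix (Fin N) (Fin N) ℝ,
      (M * X * M + α • Bstar) - X
        = α • (Bstar - (Hstar * X + X * Hstar - α • (Hstar * X * Hstar))) := by
    intro X
    rw [hMdef]
    simp only [sub_mul, mul_sub, one_mul, mul_one, smul_mul_assoc, mul_smul_comm, smul_smul,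
      smul_sub, smul_add, mul_assoc, pow_two]
    module
  have heq1 : Hstar * Cstar + Cstar * Hstar - α • (Hstar * Cstar * Hstar) = Bstar := by
    have h1 : α • (Bstar - (Hstar * Cstar + Cstar * Hstar - α • (Hstar * Cstar * Hstar))) = 0 := by
      rw [← key Cstar, ← hfix, sub_self]
    have h2 := (smul_eq_zero.mp h1).resolve_left (ne_of_gt hα)
    rw [sub_eq_zero] at h2
    exact h2.symm
  have hMconj : star U * M * U = Dd := by rw [hM]; exact sandsU Dd
  have huniq : ∀ C' : Matrix (Fin N) (Fin N) ℝ,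
      Hstar * C' + C' * Hstar - α • (Hstar * C' * Hstar) = Bstar → C' = Cstar := by
    intro C' hC'
    have h1 : (M * C' * M + α • Bstar) - C' = 0 := by
      rw [key C', hC', sub_self, smul_zero]
    have h2 : C' = M * C' * M + α • Bstar := (sub_eq_zero.mp h1).symm
    have h4 : star U * (M * C' * M) * U = Dd * (star U * C' * U) * Dd := by
      rw [conjTriple, hMconj]
    have h3 : star U * C' * U = Dd * (star U * C' * U) * Dd + α • Bt := by
      calc star U * C' * U = star U * (M * C' * M + α • Bstar) * U := by rw [← h2]
        _ = star U * (M * C' * M) * U + α • (star U * Bstar * U) := by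
            simp only [mul_add, add_mul, smul_mul_assoc, mul_smul_comm]
        _ = Dd * (star U * C' * U) * Dd + α • Bt := by rw [h4, hBtdef]
    have h5 : star U * C' * U = Ystar := by
      ext i j
      have h6 := congrFun (congrFun h3 i) j
      simp only [Matrix.add_apply, Matrix.smul_apply, hDd, Matrix.mul_diagonal,
        Matrix.diagonal_mul, smul_eq_mul] at h6
      rw [hYstar_apply, eq_div_iff (hden i j).ne']
      linear_combination h6
    calc C' = U * (star U * C' * U) * star U := (sandU C').symm
      _ = U * Ystar * star U := by rw [h5]
      _ = Cstar := rfl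
  -- symmetry
  have hBsymm : Bstar.transpose = Bstar := by
    ext i j
    have h1 : Tendsto (fun k => B k i j) atTop (𝓝 (Bstar i j)) := tendsto_entry hBlim i j
    have h2 : Tendsto (fun k => B k j i) atTop (𝓝 (Bstar j i)) := tendsto_entry hBlim j i
    have h3 : (fun k => B k j i) = fun k => B k i j := by
      funext k
      have h := (hBpsd k).1
      have h4 := congrFun (congrFun h i) j
      simpa [Matrix.conjTranspose_apply] using h4
    rw [h3] at h2
    exact tendsto_nhds_unique h2 h1
  have hBtsymm : Bt.transpose = Bt := by
    rw [hBtdef, hsU]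
    calc (U.transpose * Bstar * U).transpose
        = U.transpose * (Bstar.transpose * U.transpose.transpose) := by
          simp [Matrix.transpose_mul, mul_assoc]
      _ = U.transpose * Bstar * U := by
          rw [Matrix.transpose_transpose, hBsymm, mul_assoc]
  have hYsymm : Ystar.transpose = Ystar := by
    ext i j
    have hb := congrFun (congrFun hBtsymm i) j
    simp only [Matrix.transpose_apply] at hb
    rw [Matrix.transpose_apply, hYstar_apply, hYstar_apply, hb, mul_comm (d j) (d i)]
  have hCsymm : Cstar.IsSymm := by
    show Cstar.transpose = Cstar
    rw [hCstardef, hsU]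
    calc (U * Ystar * U.transpose).transpose
        = U.transpose.transpose * (Ystar.transpose * U.transpose) := by
          simp [Matrix.transpose_mul, mul_assoc]
      _ = U * Ystar * U.transpose := by
          rw [Matrix.transpose_transpose, hYsymm, ← mul_assoc]
  -- convergence
  have expand : ∀ (Hm X Bm : Matrix (Fin N) (Fin N) ℝ),
      (1 - α • Hm) * X * (1 - α • Hm) + α • Bm
        = X - α • (Hm * X) - α • (X * Hm) + α ^ 2 • (Hm * X * Hm) + α • Bm := by
    intro Hm X Bm
    simp only [sub_mul, mul_sub, one_mul, mul_one, smul_mul_assoc, mul_smul_comm, smul_smul,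
      mul_assoc, pow_two]
    module
  have hrec2 : ∀ k, C (k + 1) = (1 - α • H k) * C k * (1 - α • H k) + α • B k := by
    intro k
    rw [hCrec k, expand]
  set Y : ℕ → Matrix (Fin N) (Fin N) ℝ := fun k => star U * C k * U with hYdef
  set P : ℕ → Matrix (Fin N) (Fin N) ℝ := fun k => star U * (1 - α • H k) * U with hPdef
  set G : ℕ → Matrix (Fin N) (Fin N) ℝ := fun k => star U * B k * U with hGdef
  have hYrec : ∀ k, Y (k + 1) = P k * Y k * P k + α • G k := by
    intro k
    show star U * C (k + 1) * U = _
    rw [hrec2 k]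
    have h1 : star U * ((1 - α • H k) * C k * (1 - α • H k)) * U = P k * Y k * P k := by
      rw [conjTriple]
    calc star U * ((1 - α • H k) * C k * (1 - α • H k) + α • B k) * U
        = star U * ((1 - α • H k) * C k * (1 - α • H k)) * U + α • (star U * B k * U) := by
          simp only [mul_add, add_mul, smul_mul_assoc, mul_smul_comm]
      _ = P k * Y k * P k + α • G k := by rw [h1, hGdef]
  have hPD : ∀ k, P k - Dd = star U * (α • (Hstar - H k)) * U := by
    intro k
    have h1 : (1 - α • H k) - M = α • (Hstar - H k) := by
      rw [hMdef]
      simp only [smul_sub]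
      abel
    calc P k - Dd = star U * (1 - α • H k) * U - star U * M * U := by rw [hMconj, hPdef]
      _ = star U * ((1 - α • H k) - M) * U := by simp only [mul_sub, sub_mul]
      _ = star U * (α • (Hstar - H k)) * U := by rw [h1]
  have hGB : ∀ k, G k - Bt = star U * (B k - Bstar) * U := by
    intro k
    calc G k - Bt = star U * B k * U - star U * Bstar * U := by rw [hGdef, hBtdef]
      _ = star U * (B k - Bstar) * U := by simp only [mul_sub, sub_mul]
  have hδtend : Tendsto (fun k => matNN (P k - Dd)) atTop (𝓝 0) := by
    have hH0 : Tendsto (fun k => matNN (H k - Hstar)) atTop (𝓝 0) := matNN_tendsto hHlim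
    refine squeeze_zero (g := fun k => (matNN (star U) * α * matNN U) * matNN (H k - Hstar))
      (fun k => matNN_nonneg _) (fun k => ?_) ?_
    · show matNN (P k - Dd) ≤ (matNN (star U) * α * matNN U) * matNN (H k - Hstar)
      rw [hPD k]
      have h1 : matNN (star U * (α • (Hstar - H k)) * U)
          ≤ matNN (star U) * matNN (α • (Hstar - H k)) * matNN U := by
        refine le_trans (matNN_mul_le _ _) ?_
        exact mul_le_mul_of_nonneg_right (matNN_mul_le _ _) (matNN_nonneg _)
      have h2 : matNN (α • (Hstar - H k)) = α * matNN (H k - Hstar) := by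
        rw [matNN_smul, abs_of_pos hα, show Hstar - H k = -(H k - Hstar) by abel, matNN_neg]
      rw [h2] at h1
      calc matNN (star U * (α • (Hstar - H k)) * U)
          ≤ matNN (star U) * (α * matNN (H k - Hstar)) * matNN U := h1
        _ = (matNN (star U) * α * matNN U) * matNN (H k - Hstar) := by ring
    · have := hH0.const_mul (matNN (star U) * α * matNN U)
      simpa using this
  have hβtend : Tendsto (fun k => matNN (G k - Bt)) atTop (𝓝 0) := by
    have hB0 : Tendsto (fun k => matNN (B k - Bstar)) atTop (𝓝 0) := matNN_tendsto hBlim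
    refine squeeze_zero (g := fun k => (matNN (star U) * matNN U) * matNN (B k - Bstar))
      (fun k => matNN_nonneg _) (fun k => ?_) ?_
    · show matNN (G k - Bt) ≤ (matNN (star U) * matNN U) * matNN (B k - Bstar)
      rw [hGB k]
      have h1 : matNN (star U * (B k - Bstar) * U)
          ≤ matNN (star U) * matNN (B k - Bstar) * matNN U := by
        refine le_trans (matNN_mul_le _ _) ?_
        exact mul_le_mul_of_nonneg_right (matNN_mul_le _ _) (matNN_nonneg _)
      calc matNN (star U * (B k - Bstar) * U)
          ≤ matNN (star U) * matNN (B k - Bstar) * matNN U := h1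
        _ = (matNN (star U) * matNN U) * matNN (B k - Bstar) := by ring
    · have := hB0.const_mul (matNN (star U) * matNN U)
      simpa using this
  set nD : ℝ := matNN Dd with hnDdef
  set cY : ℝ := matNN Ystar with hcYdef
  have hnD : 0 ≤ nD := matNN_nonneg _
  have hcY : 0 ≤ cY := matNN_nonneg _
  have hq2lt : q ^ 2 < 1 := by nlinarith
  have hδ0pos : (0:ℝ) < min 1 ((1 - q ^ 2) / (2 * (2 * nD + 2))) := by
    refine lt_min one_pos ?_
    have h1 : (0:ℝ) < 1 - q ^ 2 := by linarith
    have h2 : (0:ℝ) < 2 * (2 * nD + 2) := by linarith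
    positivity
  have hεtend : Tendsto (fun k => (cY * (nD + 1)) * matNN (P k - Dd)
      + (nD * cY) * matNN (P k - Dd) + α * matNN (G k - Bt)) atTop (𝓝 0) := by
    have h1 := (hδtend.const_mul (cY * (nD + 1))).add (hδtend.const_mul (nD * cY))
    have h2 := h1.add (hβtend.const_mul α)
    simpa using h2
  have genIden : ∀ Pm Ddm Yk Ys Gm Btm : Matrix (Fin N) (Fin N) ℝ,
      (Pm * Yk * Pm + α • Gm) - (Ddm * Ys * Ddm + α • Btm)
        = Ddm * (Yk - Ys) * Ddm + (Pm - Ddm) * Yk * Pm + Ddm * Yk * (Pm - Ddm)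
          + α • (Gm - Btm) := by
    intro Pm Ddm Yk Ys Gm Btm
    simp only [sub_mul, mul_sub, smul_sub, mul_assoc]
    abel
  have hbound : ∀ᶠ k in atTop, matNN (Y (k + 1) - Ystar)
      ≤ ((1 + q ^ 2) / 2) * matNN (Y k - Ystar)
        + ((cY * (nD + 1)) * matNN (P k - Dd) + (nD * cY) * matNN (P k - Dd)
          + α * matNN (G k - Bt)) := by
    filter_upwards [hδtend.eventually (Iio_mem_nhds hδ0pos)] with k hδk
    have hδ1 : matNN (P k - Dd) ≤ 1 := le_trans (le_of_lt hδk) (min_le_left _ _)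
    have hδ0le : matNN (P k - Dd) ≤ (1 - q ^ 2) / (2 * (2 * nD + 2)) :=
      le_trans (le_of_lt hδk) (min_le_right _ _)
    have h2pos : (0:ℝ) < 2 * (2 * nD + 2) := by linarith
    rw [le_div_iff₀ h2pos] at hδ0le
    have hiden : Y (k + 1) - Ystar
        = Dd * (Y k - Ystar) * Dd + (P k - Dd) * Y k * P k + Dd * Y k * (P k - Dd)
          + α • (G k - Bt) := by
      calc Y (k + 1) - Ystar
          = (P k * Y k * P k + α • G k) - (Dd * Ystar * Dd + α • Bt) := by
            rw [hYrec k, hYfix]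
        _ = _ := genIden _ _ _ _ _ _
    have hb1 : matNN (Y (k + 1) - Ystar)
        ≤ matNN (Dd * (Y k - Ystar) * Dd) + matNN ((P k - Dd) * Y k * P k)
          + matNN (Dd * Y k * (P k - Dd)) + matNN (α • (G k - Bt)) := by
      rw [hiden]
      have t1 := matNN_add_le
        (Dd * (Y k - Ystar) * Dd + (P k - Dd) * Y k * P k + Dd * Y k * (P k - Dd))
        (α • (G k - Bt))
      have t2 := matNN_add_le (Dd * (Y k - Ystar) * Dd + (P k - Dd) * Y k * P k)
        (Dd * Y k * (P k - Dd))
      have t3 := matNN_add_le (Dd * (Y k - Ystar) * Dd) ((P k - Dd) * Y k * P k)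
      linarith
    have hc1 : matNN (Dd * (Y k - Ystar) * Dd) ≤ q ^ 2 * matNN (Y k - Ystar) := by
      have := matNN_diag_conj d q hq0 hdq (Y k - Ystar)
      rw [← hDd] at this
      exact this
    have hYk : matNN (Y k) ≤ matNN (Y k - Ystar) + cY := by
      have := matNN_add_le (Y k - Ystar) Ystar
      rw [sub_add_cancel] at this
      exact this
    have hPk : matNN (P k) ≤ nD + 1 := by
      have := matNN_add_le (P k - Dd) Dd
      rw [sub_add_cancel] at this
      linarith
    have hc2 : matNN ((P k - Dd) * Y k * P k)
        ≤ matNN (P k - Dd) * matNN (Y k) * matNN (P k) :=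
      le_trans (matNN_mul_le _ _)
        (mul_le_mul_of_nonneg_right (matNN_mul_le _ _) (matNN_nonneg _))
    have hc3 : matNN (Dd * Y k * (P k - Dd)) ≤ nD * matNN (Y k) * matNN (P k - Dd) :=
      le_trans (matNN_mul_le _ _)
        (mul_le_mul_of_nonneg_right (matNN_mul_le _ _) (matNN_nonneg _))
    have hc4 : matNN (α • (G k - Bt)) = α * matNN (G k - Bt) := by
      rw [matNN_smul, abs_of_pos hα]
    have hek : (0:ℝ) ≤ matNN (Y k - Ystar) := matNN_nonneg _
    have hδnn : (0:ℝ) ≤ matNN (P k - Dd) := matNN_nonneg _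
    have hmm1 : matNN (Y k) * matNN (P k) ≤ (matNN (Y k - Ystar) + cY) * (nD + 1) :=
      mul_le_mul hYk hPk (matNN_nonneg _) (by linarith)
    have hmm2 : matNN (P k - Dd) * (matNN (Y k) * matNN (P k))
        ≤ matNN (P k - Dd) * ((matNN (Y k - Ystar) + cY) * (nD + 1)) :=
      mul_le_mul_of_nonneg_left hmm1 hδnn
    have hmm3 : nD * matNN (Y k) * matNN (P k - Dd)
        ≤ nD * (matNN (Y k - Ystar) + cY) * matNN (P k - Dd) :=
      mul_le_mul_of_nonneg_right (mul_le_mul_of_nonneg_left hYk hnD) hδnn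
    have hkey : matNN (P k - Dd) * (2 * (2 * nD + 2)) * matNN (Y k - Ystar)
        ≤ (1 - q ^ 2) * matNN (Y k - Ystar) :=
      mul_le_mul_of_nonneg_right hδ0le hek
    nlinarith [mul_nonneg hδnn hek, mul_nonneg (mul_nonneg hδnn hek) hnD,
      mul_nonneg hδnn hcY, mul_nonneg (mul_nonneg hδnn hcY) hnD]
  have hq'0 : (0:ℝ) ≤ (1 + q ^ 2) / 2 := by positivity
  have hq'1 : (1 + q ^ 2) / 2 < 1 := by nlinarith
  have hetend : Tendsto (fun k => matNN (Y k - Ystar)) atTop (𝓝 0) :=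
    seq_tendsto_zero (fun k => matNN (Y k - Ystar))
      (fun k => (cY * (nD + 1)) * matNN (P k - Dd) + (nD * cY) * matNN (P k - Dd)
        + α * matNN (G k - Bt))
      (fun k => matNN_nonneg _) _ hq'0 hq'1 hbound hεtend
  have hCsand : ∀ k, C k = U * Y k * star U := fun k => (sandU (C k)).symm
  have hCdiff : ∀ k, C k - Cstar = U * (Y k - Ystar) * star U := by
    intro k
    calc C k - Cstar = U * Y k * star U - U * Ystar * star U := by
          rw [← hCsand k, hCstardef]
      _ = U * (Y k - Ystar) * star U := by simp only [mul_sub, sub_mul]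
  have hCtend : Tendsto C atTop (𝓝 Cstar) := by
    apply tendsto_of_matNN
    refine squeeze_zero (g := fun k => matNN U * matNN (star U) * matNN (Y k - Ystar))
      (fun k => matNN_nonneg _) (fun k => ?_) ?_
    · show matNN (C k - Cstar) ≤ matNN U * matNN (star U) * matNN (Y k - Ystar)
      rw [hCdiff k]
      calc matNN (U * (Y k - Ystar) * star U)
          ≤ matNN U * matNN (Y k - Ystar) * matNN (star U) :=
            le_trans (matNN_mul_le _ _)
              (mul_le_mul_of_nonneg_right (matNN_mul_le _ _) (matNN_nonneg _))
        _ = matNN U * matNN (star U) * matNN (Y k - Ystar) := by ring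
    · have := hetend.const_mul (matNN U * matNN (star U))
      simpa using this
  exact ⟨Cstar, ⟨hCsymm, heq1, hfix⟩, fun C' _ hC' => huniq C' hC', hCtend⟩
end

section
/- Let H be a symmetric positive-definite N×N real matrix, B a symmetric positive-semidefinite N×N matrix, and α > 0 with α·λ_max(H) < 2, and let C be the unique symmetric solution of HC + CH − αHCH = B. Then the exact trace identity 2·tr(CH) = tr(B) + α·tr(HCH) holds, C is positive semidefinite, and consequently (1/2)·tr(B) ≤ tr(CH) ≤ tr(B)/(2 − α·λ_max(H)); in particular tr(CH) = (1/2)·tr(B) + O(α) as α → 0 with H and B fixed. -/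
open Matrix

lemma psd_trace_nonneg {n : ℕ} {M : Matrix (Fin n) (Fin n) ℝ} (hM : M.PosSemidef) :
    0 ≤ M.trace := by
  rw [Matrix.trace]
  refine Finset.sum_nonneg fun i _ => ?_
  have := hM.dotProduct_mulVec_nonneg (Pi.single i 1)
  simpa [Matrix.diag] using this

lemma psd_trace_mul_nonneg {n : ℕ} {A M : Matrix (Fin n) (Fin n) ℝ}
    (hA : A.PosSemidef) (hM : M.PosSemidef) : 0 ≤ (A * M).trace := by
  obtain ⟨X, hX⟩ : ∃ X : Matrix (Fin n) (Fin n) ℝ, A = Xᴴ * X := by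
    open scoped MatrixOrder in exact CStarAlgebra.nonneg_iff_eq_star_mul_self.mp hA.nonneg
  rw [hX, Matrix.mul_assoc, Matrix.trace_mul_comm]
  exact psd_trace_nonneg (hM.mul_mul_conjTranspose_same X)

/-- trace identity and bounds for the stationary covariance of the
SGD fluctuations. -/
theorem stationary_covariance_trace_bounds
    (N : ℕ) (α : ℝ) (hα : 0 < α)
    (H : Matrix (Fin N) (Fin N) ℝ) (hHpos : H.PosDef)
    (B : Matrix (Fin N) (Fin N) ℝ) (hBpsd : B.PosSemidef)
    (hαH : α * (⨆ i, hHpos.1.eigenvalues i) < 2)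
    (C : Matrix (Fin N) (Fin N) ℝ) (hCsymm : C.IsSymm)
    (hCeq : H * C + C * H - α • (H * C * H) = B) :
    2 * (C * H).trace = B.trace + α * (H * C * H).trace ∧
      C.PosSemidef ∧
      (1 / 2) * B.trace ≤ (C * H).trace ∧
      (C * H).trace ≤ B.trace / (2 - α * ⨆ i, hHpos.1.eigenvalues i) := by
  set lam := hHpos.1.eigenvalues with hlamdef
  set lmax := ⨆ i, lam i with hlmaxdef
  set U : Matrix (Fin N) (Fin N) ℝ := (hHpos.1.eigenvectorUnitary : Matrix (Fin N) (Fin N) ℝ)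
    with hUdef
  set V : Matrix (Fin N) (Fin N) ℝ :=
    star (hHpos.1.eigenvectorUnitary : Matrix (Fin N) (Fin N) ℝ) with hVdef
  have hUV : U * V = 1 := Unitary.coe_mul_star_self _
  have hVU : V * U = 1 := Unitary.coe_star_mul_self _
  have hVUH : V = Uᴴ := by rw [hUdef, hVdef, Matrix.star_eq_conjTranspose]
  have hD : V * H * U = diagonal lam := by
    have := hHpos.1.conjStarAlgAut_star_eigenvectorUnitary
    rw [RCLike.ofReal_real_eq_id] at this
    simpa using this
  have hHspec : H = U * diagonal lam * V := by
    have := hHpos.1.spectral_theorem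
    rw [RCLike.ofReal_real_eq_id] at this
    simpa using this
  have hconj : ∀ X Y : Matrix (Fin N) (Fin N) ℝ, V * (X * Y) * U = (V * X * U) * (V * Y * U) := by
    intro X Y
    calc V * (X * Y) * U = V * X * (U * V) * Y * U := by rw [hUV]; noncomm_ring
    _ = (V * X * U) * (V * Y * U) := by noncomm_ring
  have hconj2 : ∀ X Y : Matrix (Fin N) (Fin N) ℝ, U * (X * Y) * V = (U * X * V) * (U * Y * V) := by
    intro X Y
    calc U * (X * Y) * V = U * X * (V * U) * Y * V := by rw [hVU]; noncomm_ring
    _ = (U * X * V) * (U * Y * V) := by noncomm_ring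
  -- eigenvalue facts
  have hlampos : ∀ i, 0 < lam i := fun i => hHpos.eigenvalues_pos i
  have hlamle : ∀ i, lam i ≤ lmax := fun i => le_ciSup (Set.Finite.bddAbove (Set.finite_range lam)) i
  have hlam2 : ∀ i, α * lam i < 2 := fun i =>
    lt_of_le_of_lt (by have := hlamle i; nlinarith) hαH
  set r : Fin N → ℝ := fun i => 1 - α * lam i with hrdef
  have hrabs : ∀ i, |r i| < 1 := by
    intro i
    rw [abs_lt]
    constructor
    · have := hlam2 i; simp only [hrdef]; linarith
    · have := hlampos i; simp only [hrdef]; nlinarith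
  set d : Fin N → Fin N → ℝ := fun i j => lam i + lam j - α * (lam i * lam j) with hddef
  have hdpos : ∀ i j, 0 < d i j := by
    intro i j
    have h1 := hlampos i; have h2 := hlampos j
    have h3 := hlam2 i; have h4 := hlam2 j
    simp only [hddef]
    nlinarith [mul_pos h1 (show (0:ℝ) < 2 - α * lam j by linarith),
      mul_pos h2 (show (0:ℝ) < 2 - α * lam i by linarith)]
  have h1mr : ∀ i j, 1 - r i * r j = α * d i j := by
    intro i j; simp only [hrdef, hddef]; ring
  -- conjugated matrices
  set C' := V * C * U with hC'def
  set B' := V * B * U with hB'def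
  have hB'psd : B'.PosSemidef := by
    rw [hB'def, hVUH]
    exact hBpsd.conjTranspose_mul_mul_same U
  -- diagonal equation
  have key := congrArg (fun X => V * X * U) hCeq
  simp only [Matrix.add_mul, Matrix.mul_add, Matrix.sub_mul, Matrix.mul_sub,
    Matrix.smul_mul, Matrix.mul_smul] at key
  rw [hconj (H * C) H, hconj H C, hconj C H, hD] at key
  -- key : diagonal lam * C' + C' * diagonal lam - α • (diagonal lam * C' * diagonal lam) = B'
  have hC'entry : ∀ i j, C' i j = B' i j / d i j := by
    intro i j
    have h := congrFun (congrFun key i) j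
    simp only [Matrix.add_apply, Matrix.sub_apply, Matrix.smul_apply, Matrix.diagonal_mul,
      Matrix.mul_diagonal, smul_eq_mul] at h
    rw [eq_div_iff (ne_of_gt (hdpos i j))]
    simp only [hddef]
    linear_combination h
  -- C' is PSD
  have hC'herm : C'.IsHermitian := by
    have hC : Cᴴ = C := by
      rw [Matrix.conjTranspose]
      ext i j; simpa using congrFun (congrFun hCsymm i) j
    show C'ᴴ = C'
    rw [hC'def, Matrix.conjTranspose_mul, Matrix.conjTranspose_mul, hC, ← hVUH,
      hVUH, Matrix.conjTranspose_conjTranspose, ← hVUH, Matrix.mul_assoc]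
  have hC'psd : C'.PosSemidef := by
    refine Matrix.PosSemidef.of_dotProduct_mulVec_nonneg hC'herm fun x => ?_
    have hstar : star x = x := by funext i; simp
    rw [hstar]
    have hform : x ⬝ᵥ (C' *ᵥ x) = ∑ i, ∑ j, x i * (C' i j * x j) := by
      simp [dotProduct, Matrix.mulVec, Finset.mul_sum]
    rw [hform]
    have hsummable : ∀ i j : Fin N, Summable (fun n : ℕ => x i * B' i j * x j * (r i * r j) ^ n) := by
      intro i j
      apply Summable.mul_left
      apply summable_geometric_of_norm_lt_one
      rw [norm_mul, Real.norm_eq_abs, Real.norm_eq_abs]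
      nlinarith [hrabs i, hrabs j, abs_nonneg (r i), abs_nonneg (r j),
        mul_nonneg (abs_nonneg (r i)) (sub_nonneg.mpr (hrabs j).le)]
    have hnormlt : ∀ i j : Fin N, ‖r i * r j‖ < 1 := by
      intro i j
      rw [Real.norm_eq_abs, abs_mul]
      nlinarith [hrabs i, hrabs j, abs_nonneg (r i), abs_nonneg (r j),
        mul_nonneg (abs_nonneg (r i)) (sub_nonneg.mpr (hrabs j).le)]
    have hterm : ∀ i j, x i * (C' i j * x j)
        = α * ∑' n : ℕ, x i * B' i j * x j * (r i * r j) ^ n := by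
      intro i j
      rw [tsum_mul_left, tsum_geometric_of_norm_lt_one (hnormlt i j), h1mr i j, hC'entry i j]
      have h1 : d i j ≠ 0 := ne_of_gt (hdpos i j)
      have h2 : α ≠ 0 := ne_of_gt hα
      field_simp
    have hswap : ∑ i, ∑ j, ∑' n : ℕ, x i * B' i j * x j * (r i * r j) ^ n
        = ∑' n : ℕ, ∑ i, ∑ j, x i * B' i j * x j * (r i * r j) ^ n := by
      have inner : ∀ i : Fin N, ∑ j, ∑' n : ℕ, x i * B' i j * x j * (r i * r j) ^ n
          = ∑' n : ℕ, ∑ j, x i * B' i j * x j * (r i * r j) ^ n :=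
        fun i => (Summable.tsum_finsetSum fun j _ => hsummable i j).symm
      rw [Finset.sum_congr rfl fun i _ => inner i]
      exact (Summable.tsum_finsetSum fun i _ => summable_sum fun j _ => hsummable i j).symm
    have hQ : ∀ n : ℕ, 0 ≤ ∑ i, ∑ j, x i * B' i j * x j * (r i * r j) ^ n := by
      intro n
      have hpsd := hB'psd.dotProduct_mulVec_nonneg (fun i => r i ^ n * x i)
      have hstar2 : star (fun i => r i ^ n * x i) = fun i => r i ^ n * x i := by
        funext i; simp
      rw [hstar2] at hpsd
      calc (0:ℝ) ≤ (fun i => r i ^ n * x i) ⬝ᵥ (B' *ᵥ fun i => r i ^ n * x i) := hpsd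
        _ = ∑ i, ∑ j, x i * B' i j * x j * (r i * r j) ^ n := by
          simp only [dotProduct, Matrix.mulVec, Finset.mul_sum]
          exact Finset.sum_congr rfl fun i _ => Finset.sum_congr rfl fun j _ => by rw [mul_pow]; ring
    calc (0:ℝ) ≤ α * ∑' n : ℕ, ∑ i, ∑ j, x i * B' i j * x j * (r i * r j) ^ n :=
          mul_nonneg hα.le (tsum_nonneg hQ)
      _ = ∑ i, ∑ j, x i * (C' i j * x j) := by
          simp_rw [hterm, ← Finset.mul_sum]
          rw [hswap]
  -- C is PSD
  have hCU : U * C' * V = C := by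
    rw [hC'def]
    calc U * (V * C * U) * V = (U * V) * C * (U * V) := by noncomm_ring
      _ = C := by rw [hUV, Matrix.one_mul, Matrix.mul_one]
  have hCpsd : C.PosSemidef := by
    rw [← hCU, hVUH]
    exact hC'psd.mul_mul_conjTranspose_same U
  -- trace identity
  have htr := congrArg Matrix.trace hCeq
  rw [Matrix.trace_sub, Matrix.trace_add, Matrix.trace_smul, Matrix.trace_mul_comm H C,
    smul_eq_mul] at htr
  have hHconj : Hᴴ = H := hHpos.1
  have hHCHpsd : (H * C * H).PosSemidef := by
    have h1 := hCpsd.mul_mul_conjTranspose_same H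
    rwa [hHconj] at h1
  have hHCHnn : 0 ≤ (H * C * H).trace := psd_trace_nonneg hHCHpsd
  have htr2 : (H * C * H).trace = (C * (H * H)).trace := by
    rw [Matrix.trace_mul_comm (H * C) H, ← Matrix.mul_assoc, Matrix.trace_mul_comm (H * H) C]
  -- lmax • H - H * H is PSD
  set g : Fin N → ℝ := fun i => lmax * lam i - lam i * lam i with hgdef
  have hgnn : 0 ≤ g := by
    intro i
    have h1 := hlamle i
    have h2 := hlampos i
    simp only [hgdef, Pi.zero_apply]
    nlinarith [mul_nonneg (sub_nonneg.mpr (hlamle i)) (hlampos i).le]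
  have hdiagg : diagonal g = lmax • diagonal lam - diagonal lam * diagonal lam := by
    rw [Matrix.diagonal_mul_diagonal]
    ext i j
    by_cases h : i = j <;> simp [h, hgdef, Matrix.diagonal]
  have hMeq : U * diagonal g * V = lmax • H - H * H := by
    rw [hdiagg, Matrix.mul_sub, Matrix.sub_mul, hconj2, Matrix.mul_smul, Matrix.smul_mul,
      ← hHspec]
  have hMpsd : (lmax • H - H * H).PosSemidef := by
    rw [← hMeq, hVUH]
    exact (Matrix.PosSemidef.diagonal hgnn).mul_mul_conjTranspose_same U
  have ht3 := psd_trace_mul_nonneg hCpsd hMpsd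
  rw [Matrix.mul_sub, Matrix.mul_smul, Matrix.trace_sub, Matrix.trace_smul, smul_eq_mul] at ht3
  -- ht3 : 0 ≤ lmax * (C*H).trace - (C*(H*H)).trace
  have hub : α * (H * C * H).trace ≤ α * (lmax * (C * H).trace) := by
    rw [htr2]
    exact mul_le_mul_of_nonneg_left (by linarith) hα.le
  have hαHCH : 0 ≤ α * (H * C * H).trace := mul_nonneg hα.le hHCHnn
  refine ⟨by linarith, hCpsd, by linarith, ?_⟩
  rw [le_div_iff₀ (by linarith : (0:ℝ) < 2 - α * lmax)]
  nlinarith [htr, hub]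
end
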